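/- Let (X, μ) and (Y, ν) be probability spaces, let T be an invertible bimeasurable measure-preserving transformation of (X, μ) and S an invertible bimeasurable measure-preserving transformation of (Y, ν), and suppose the Koopman operators of T on L²(X, μ) and of S on L²(Y, ν) each have simple spectrum (admit a cyclic vector). If there exists a sequence (n_i) of natural numbers such that the Koopman operators of (T × S)^[n_i] on L²(X × Y, μ ⊗ ν) converge in the weak operator topology to the Koopman operator of id × S (i.e. for all F, G ∈ L²(X × Y, μ ⊗ ν), ⟪F ∘ (T × S)^[n_i], G⟫ → ⟪F ∘ (id × S), G⟫), then the Koopman operator of T × S on L²(X × Y, μ ⊗ ν) has simple spectrum. -/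

import Mathlib

open MeasureTheory Filter

/-- The Koopman operator of an invertible measure-preserving transformation `T` of a
probability space `(Z, μ)` has *simple spectrum* if it admits a cyclic vector: some
`f ∈ L²(Z, μ)` whose orbit `{f ∘ T^k : k ∈ ℤ}` has dense linear span in `L²(Z, μ)`. -/
def HasSimpleKoopmanSpectrum {Z : Type*} [MeasurableSpace Z] (μ : Measure Z)
    (T : Equiv.Perm Z) : Prop :=
  ∃ f : Lp ℂ 2 μ,
    Dense (↑(Submodule.span ℂ
        {h : Lp ℂ 2 μ | ∃ k : ℤ, (h : Z → ℂ) =ᵐ[μ] fun x => f ((T ^ k) x)}) :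
      Set (Lp ℂ 2 μ))

/-!
If `f` and `g` are cyclic for `T` and `S`, then so is `f ⊗ g` for `T × S`. Let `K` be the closed
span of its orbit `(T × S)^k (f ⊗ g) = T^k f ⊗ S^k g`. A closed subspace invariant under
operators `A i` is invariant under their weak limits, being the annihilator of its orthogonal
complement; and if unitaries `U i` converge weakly to a unitary `V`, then `(U i)⁻¹ → V⁻¹`
weakly, by taking adjoints. So `K`, invariant under the Koopman operator of `T × S` and its
inverse, is invariant under that of `id × S` and its inverse. Hence `K` contains every
`T^j f ⊗ S^k g`, and these span a dense subspace because a function orthogonal to all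
`1_A ⊗ 1_B` vanishes.
-/

open Set
open scoped ENNReal InnerProductSpace Topology

section Isometry

variable {𝕜 E : Type*} [NormedField 𝕜] [SeminormedAddCommGroup E] [NormedSpace 𝕜 E]

theorem LinearIsometryEquiv.mapsTo_zpow {U : E ≃ₗᵢ[𝕜] E} {s : Set E} (h : MapsTo U s s)
    (h' : MapsTo U.symm s s) (k : ℤ) : MapsTo ⇑(U ^ k) s s := by
  induction k using Int.induction_on with
  | zero => exact mapsTo_id s
  | succ k ih => rw [zpow_add_one, LinearIsometryEquiv.coe_mul]; exact ih.comp h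
  | pred k ih => rw [zpow_sub_one, LinearIsometryEquiv.coe_mul]; exact ih.comp h'

theorem LinearIsometryEquiv.zpow_apply_of_apply_eq {E₁ E₂ E₃ : Type*}
    [SeminormedAddCommGroup E₁] [SeminormedAddCommGroup E₂] [SeminormedAddCommGroup E₃]
    [Module 𝕜 E₁] [Module 𝕜 E₂] [Module 𝕜 E₃] {φ : E₁ → E₂ → E₃}
    {P : E₁ ≃ₗᵢ[𝕜] E₁} {Q : E₂ ≃ₗᵢ[𝕜] E₂} {R : E₃ ≃ₗᵢ[𝕜] E₃}
    (h : ∀ a b, R (φ a b) = φ (P a) (Q b)) (k : ℤ) (a : E₁) (b : E₂) :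
    (R ^ k) (φ a b) = φ ((P ^ k) a) ((Q ^ k) b) := by
  induction k using Int.induction_on generalizing a b with
  | zero => rfl
  | succ k ih => simp only [zpow_add_one, LinearIsometryEquiv.coe_mul, Function.comp_apply, h, ih]
  | pred k ih =>
    have h' : ∀ a b, R.symm (φ a b) = φ (P.symm a) (Q.symm b) := fun a b => by
      rw [R.symm_apply_eq, h, P.apply_symm_apply, Q.apply_symm_apply]
    simp only [zpow_sub_one, LinearIsometryEquiv.coe_mul, Function.comp_apply,
      LinearIsometryEquiv.coe_inv, h', ih]

theorem LinearIsometryEquiv.mapsTo_zpow_topologicalClosure_span_orbit (U : E ≃ₗᵢ[𝕜] E) (x : E)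
    (m : ℤ) :
    MapsTo ⇑(U ^ m) (Submodule.span 𝕜 (range fun k : ℤ => (U ^ k) x)).topologicalClosure
      (Submodule.span 𝕜 (range fun k : ℤ => (U ^ k) x)).topologicalClosure := by
  have hspan : Submodule.span 𝕜 (range fun k : ℤ => (U ^ k) x) ≤
      (Submodule.span 𝕜 (range fun k : ℤ => (U ^ k) x)).comap
        (U ^ m).toLinearEquiv.toLinearMap := by
    rw [Submodule.span_le]
    rintro _ ⟨k, rfl⟩
    refine Submodule.subset_span ⟨m + k, ?_⟩
    simp [zpow_add]
  intro v hv
  rw [Submodule.topologicalClosure_coe] at hv ⊢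
  exact map_mem_closure (U ^ m).continuous hv fun w hw => hspan hw

end Isometry

section Hilbert

variable {𝕜 E : Type*} [RCLike 𝕜] [NormedAddCommGroup E] [InnerProductSpace 𝕜 E]

theorem Submodule.mapsTo_of_tendsto_inner [CompleteSpace E] {K : Submodule 𝕜 E}
    (hK : IsClosed (K : Set E)) {ι : Type*} {l : Filter ι} [l.NeBot] {A : ι → E → E}
    {B : E → E} (hA : ∀ i, MapsTo (A i) K K)
    (hAB : ∀ x y, Tendsto (fun i => ⟪y, A i x⟫_𝕜) l (𝓝 ⟪y, B x⟫_𝕜)) : MapsTo B K K := by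
  intro x hx
  rw [← hK.submodule_topologicalClosure_eq, ← Submodule.orthogonal_orthogonal_eq_closure]
  refine (Submodule.mem_orthogonal _ _).2 fun y hy => ?_
  refine tendsto_nhds_unique (hAB x y) (tendsto_const_nhds.congr fun i => ?_)
  exact (Submodule.inner_left_of_mem_orthogonal (hA i hx) hy).symm

theorem LinearIsometryEquiv.tendsto_inner_symm {ι : Type*} {l : Filter ι}
    {U : ι → E ≃ₗᵢ[𝕜] E} {V : E ≃ₗᵢ[𝕜] E}
    (h : ∀ x y, Tendsto (fun i => ⟪y, U i x⟫_𝕜) l (𝓝 ⟪y, V x⟫_𝕜)) (x y : E) :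
    Tendsto (fun i => ⟪y, (U i).symm x⟫_𝕜) l (𝓝 ⟪y, V.symm x⟫_𝕜) := by
  simp_rw [← LinearIsometryEquiv.inner_map_eq_flip, ← inner_conj_symm (U _ y),
    ← inner_conj_symm (V y)]
  exact (RCLike.continuous_conj.tendsto _).comp (h y x)

theorem Submodule.mapsTo_zpow_of_tendsto_inner_pow [CompleteSpace E] {K : Submodule 𝕜 E}
    (hK : IsClosed (K : Set E)) {U V : E ≃ₗᵢ[𝕜] E} (hU : ∀ k : ℤ, MapsTo ⇑(U ^ k) K K)
    {ι : Type*} {l : Filter ι} [l.NeBot] {n : ι → ℕ}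
    (hV : ∀ x y, Tendsto (fun i => ⟪y, (U ^ n i) x⟫_𝕜) l (𝓝 ⟪y, V x⟫_𝕜)) (k : ℤ) :
    MapsTo ⇑(V ^ k) K K :=
  V.mapsTo_zpow (mapsTo_of_tendsto_inner hK (fun i => by simpa using hU (n i)) hV)
    (mapsTo_of_tendsto_inner hK (fun i => by simpa [← LinearIsometryEquiv.inv_def] using hU (-n i))
      (LinearIsometryEquiv.tendsto_inner_symm hV)) k

end Hilbert

namespace MeasureTheory.Lp

variable {α E : Type*} [MeasurableSpace α] {μ : Measure α} [NormedAddCommGroup E] {p : ℝ≥0∞}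

theorem compMeasurePreserving_symm_compMeasurePreserving (e : α ≃ᵐ α) (he : MeasurePreserving e μ μ)
    (g : Lp E p μ) :
    compMeasurePreserving e.symm (he.symm e) (compMeasurePreserving e he g) = g :=
  Lp.ext <| by
    rw [← compMeasurePreserving_comp_apply]
    exact (coeFn_compMeasurePreserving g _).trans (by rw [e.self_comp_symm]; rfl)

variable [Fact (1 ≤ p)] (𝕜 : Type*) [NormedRing 𝕜] [Module 𝕜 E] [IsBoundedSMul 𝕜 E]

noncomputable def koopman (e : α ≃ᵐ α) (he : MeasurePreserving e μ μ) :
    Lp E p μ ≃ₗᵢ[𝕜] Lp E p μ where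
  toLinearMap := compMeasurePreservingₗ 𝕜 e he
  invFun := compMeasurePreserving e.symm (he.symm e)
  left_inv := compMeasurePreserving_symm_compMeasurePreserving e he
  right_inv g := by
    simpa using compMeasurePreserving_symm_compMeasurePreserving e.symm (he.symm e) g
  norm_map' := (norm_compMeasurePreserving · he)

variable {𝕜}

theorem coeFn_koopman (e : α ≃ᵐ α) (he : MeasurePreserving e μ μ) (g : Lp E p μ) :
    koopman 𝕜 e he g =ᵐ[μ] g ∘ e :=
  coeFn_compMeasurePreserving g he

theorem coeFn_koopman_symm (e : α ≃ᵐ α) (he : MeasurePreserving e μ μ) (g : Lp E p μ) :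
    (koopman 𝕜 e he).symm g =ᵐ[μ] g ∘ e.symm :=
  coeFn_compMeasurePreserving g (he.symm e)

theorem coeFn_koopman_zpow (e : α ≃ᵐ α) (he : MeasurePreserving e μ μ) (k : ℤ) (g : Lp E p μ) :
    (koopman 𝕜 e he ^ k) g =ᵐ[μ] g ∘ ⇑(e.toEquiv ^ k) := by
  induction k using Int.induction_on with
  | zero => rfl
  | succ k ih =>
    rw [add_comm, zpow_add, zpow_one, LinearIsometryEquiv.coe_mul, Function.comp_apply,
      add_comm, zpow_add_one, Equiv.Perm.coe_mul, ← Function.comp_assoc]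
    exact (coeFn_koopman e he _).trans (he.quasiMeasurePreserving.ae_eq_comp ih)
  | pred k ih =>
    rw [sub_eq_neg_add, zpow_add, zpow_neg_one, LinearIsometryEquiv.coe_mul,
      Function.comp_apply, LinearIsometryEquiv.coe_inv, neg_add_eq_sub, zpow_sub_one,
      Equiv.Perm.coe_mul, ← Function.comp_assoc]
    exact (coeFn_koopman_symm e he _).trans ((he.symm e).quasiMeasurePreserving.ae_eq_comp ih)

theorem coeFn_koopman_pow (e : α ≃ᵐ α) (he : MeasurePreserving e μ μ) (n : ℕ) (g : Lp E p μ) :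
    (koopman 𝕜 e he ^ n) g =ᵐ[μ] g ∘ (⇑e)^[n] := by
  simpa [Equiv.Perm.coe_pow] using coeFn_koopman_zpow e he n g

theorem koopman_refl (h : MeasurePreserving (MeasurableEquiv.refl α) μ μ) :
    koopman 𝕜 (MeasurableEquiv.refl α) h = (1 : Lp E p μ ≃ₗᵢ[𝕜] _) :=
  LinearIsometryEquiv.ext fun g => Lp.ext (coeFn_koopman _ h g)

end MeasureTheory.Lp

theorem hasSimpleKoopmanSpectrum_iff {α : Type*} [MeasurableSpace α] {μ : Measure α}
    (e : α ≃ᵐ α) (he : MeasurePreserving e μ μ) :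
    HasSimpleKoopmanSpectrum μ e.toEquiv ↔ ∃ f : Lp ℂ 2 μ,
      Dense (Submodule.span ℂ (range fun k : ℤ => (Lp.koopman ℂ e he ^ k) f) : Set (Lp ℂ 2 μ)) := by
  have orbit (f : Lp ℂ 2 μ) :
      {h : Lp ℂ 2 μ | ∃ k : ℤ, h =ᵐ[μ] fun x => f ((e.toEquiv ^ k) x)} =
        range fun k : ℤ => (Lp.koopman ℂ e he ^ k) f := by
    ext h
    refine exists_congr fun k => ⟨fun hk => ?_, fun hk => hk ▸ Lp.coeFn_koopman_zpow e he k f⟩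
    exact (Lp.ext (hk.trans (Lp.coeFn_koopman_zpow e he k f).symm)).symm
  simp only [HasSimpleKoopmanSpectrum, orbit]

namespace MeasureTheory

variable {α β : Type*} [MeasurableSpace α] [MeasurableSpace β] {μ : Measure α} {ν : Measure β}

theorem ae_eq_mul_prod {M : Type*} [Mul M] {u u' : α → M} {v v' : β → M} (hu : u =ᵐ[μ] u')
    (hv : v =ᵐ[ν] v') :
    (fun z : α × β => u z.1 * v z.2) =ᵐ[μ.prod ν] fun z => u' z.1 * v' z.2 :=
  (Measure.quasiMeasurePreserving_fst.ae_eq_comp hu).mul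
    (Measure.quasiMeasurePreserving_snd.ae_eq_comp hv)

section NormedDivisionRing

variable {𝕜 : Type*} [NormedDivisionRing 𝕜] [SFinite ν]

theorem eLpNorm_mul_prod {p : ℝ≥0∞} (hp₀ : p ≠ 0) (hp : p ≠ ∞) {u : α → 𝕜} {v : β → 𝕜}
    (hu : AEStronglyMeasurable u μ) (hv : AEStronglyMeasurable v ν) :
    eLpNorm (fun z : α × β => u z.1 * v z.2) p (μ.prod ν) =
      eLpNorm u p μ * eLpNorm v p ν := by
  simp only [eLpNorm_eq_lintegral_rpow_enorm_toReal hp₀ hp, enorm_mul]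
  rw [← ENNReal.mul_rpow_of_nonneg _ _ (by positivity), ← lintegral_prod_mul
    (hu.enorm.pow_const _) (hv.enorm.pow_const _)]
  simp_rw [ENNReal.mul_rpow_of_nonneg _ _ ENNReal.toReal_nonneg]

theorem MemLp.mul_prod {p : ℝ≥0∞} (hp : p ≠ ∞) {u : α → 𝕜} {v : β → 𝕜} (hu : MemLp u p μ)
    (hv : MemLp v p ν) : MemLp (fun z : α × β => u z.1 * v z.2) p (μ.prod ν) := by
  have hmeas : AEStronglyMeasurable (fun z : α × β => u z.1 * v z.2) (μ.prod ν) :=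
    (hu.1.comp_quasiMeasurePreserving Measure.quasiMeasurePreserving_fst).mul
      (hv.1.comp_quasiMeasurePreserving Measure.quasiMeasurePreserving_snd)
  rcases eq_or_ne p 0 with rfl | hp₀
  · exact memLp_zero_iff_aestronglyMeasurable.2 hmeas
  · refine ⟨hmeas, ?_⟩
    rw [eLpNorm_mul_prod hp₀ hp hu.1 hv.1]
    exact ENNReal.mul_lt_top hu.2 hv.2

end NormedDivisionRing

theorem Integrable.ae_eq_zero_of_forall_setIntegral_prod_eq_zero {E : Type*}
    [NormedAddCommGroup E] [NormedSpace ℝ E] [CompleteSpace E] {ρ : Measure (α × β)}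
    {f : α × β → E} (hf : Integrable f ρ)
    (h : ∀ s, MeasurableSet s → ∀ t, MeasurableSet t → ∫ z in s ×ˢ t, f z ∂ρ = 0) :
    f =ᵐ[ρ] 0 := by
  have htotal : ∫ z, f z ∂ρ = 0 := by
    simpa using h univ .univ univ .univ
  suffices hall : ∀ c, MeasurableSet c → ∫ z in c, f z ∂ρ = 0 from
    hf.ae_eq_zero_of_forall_setIntegral_eq_zero fun c hc _ => hall c hc
  intro c hc
  induction c, hc using
    MeasurableSpace.induction_on_inter generateFrom_prod.symm isPiSystem_prod with
  | empty => simp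
  | basic c hc =>
    obtain ⟨s, hs, t, ht, rfl⟩ := hc
    exact h s hs t ht
  | compl c hc ih => rwa [← integral_add_compl hc hf, ih, zero_add] at htotal
  | iUnion c hdisj hc ih => simp [integral_iUnion hc hdisj hf.integrableOn, ih]

variable {𝕜 : Type*} [RCLike 𝕜]

namespace L2

section SFinite

variable [SFinite ν]

noncomputable def tensor : Lp 𝕜 2 μ →L[𝕜] Lp 𝕜 2 ν →L[𝕜] Lp 𝕜 2 (μ.prod ν) :=
  LinearMap.mkContinuous₂
    (LinearMap.mk₂ 𝕜
      (fun u v => ((Lp.memLp u).mul_prod ENNReal.ofNat_ne_top (Lp.memLp v)).toLp _)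
      (fun u u' v => by
        rw [← MemLp.toLp_add]
        exact MemLp.toLp_congr _ _ <| by
          filter_upwards [ae_eq_mul_prod (Lp.coeFn_add u u') (ae_eq_refl v)] with z hz
          rw [Pi.add_apply, hz, Pi.add_apply, add_mul])
      (fun c u v => by
        rw [← MemLp.toLp_const_smul]
        exact MemLp.toLp_congr _ _ <| by
          filter_upwards [ae_eq_mul_prod (Lp.coeFn_smul c u) (ae_eq_refl v)] with z hz
          simp [hz, mul_assoc])
      (fun u v v' => by
        rw [← MemLp.toLp_add]
        exact MemLp.toLp_congr _ _ <| by
          filter_upwards [ae_eq_mul_prod (ae_eq_refl u) (Lp.coeFn_add v v')] with z hz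
          rw [Pi.add_apply, hz, Pi.add_apply, mul_add])
      (fun c u v => by
        rw [← MemLp.toLp_const_smul]
        exact MemLp.toLp_congr _ _ <| by
          filter_upwards [ae_eq_mul_prod (ae_eq_refl u) (Lp.coeFn_smul c v)] with z hz
          simp [hz, mul_left_comm]))
    1 fun u v => le_of_eq <| by
      rw [one_mul, LinearMap.mk₂_apply, Lp.norm_toLp, eLpNorm_mul_prod two_ne_zero
        ENNReal.ofNat_ne_top (Lp.aestronglyMeasurable u) (Lp.aestronglyMeasurable v),
        ENNReal.toReal_mul]
      rfl

theorem coeFn_tensor (u : Lp 𝕜 2 μ) (v : Lp 𝕜 2 ν) :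
    tensor u v =ᵐ[μ.prod ν] fun z => u z.1 * v z.2 :=
  ((Lp.memLp u).mul_prod ENNReal.ofNat_ne_top (Lp.memLp v)).coeFn_toLp

theorem koopman_prodCongr_tensor (e : α ≃ᵐ α) (he : MeasurePreserving e μ μ) (e' : β ≃ᵐ β)
    (he' : MeasurePreserving e' ν ν)
    (hee' : MeasurePreserving (e.prodCongr e') (μ.prod ν) (μ.prod ν))
    (u : Lp 𝕜 2 μ) (v : Lp 𝕜 2 ν) :
    Lp.koopman 𝕜 (e.prodCongr e') hee' (tensor u v) =
      tensor (Lp.koopman 𝕜 e he u) (Lp.koopman 𝕜 e' he' v) :=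
  Lp.ext <| by
    filter_upwards [Lp.coeFn_koopman (𝕜 := 𝕜) (e.prodCongr e') hee' (tensor u v),
      hee'.quasiMeasurePreserving.ae_eq_comp (coeFn_tensor u v),
      coeFn_tensor (Lp.koopman 𝕜 e he u) (Lp.koopman 𝕜 e' he' v),
      ae_eq_mul_prod (Lp.coeFn_koopman (𝕜 := 𝕜) e he u)
        (Lp.coeFn_koopman (𝕜 := 𝕜) e' he' v)]
      with z h₁ h₂ h₃ h₄
    rw [h₁, h₃]
    exact h₂.trans h₄.symm

theorem koopman_prodCongr_zpow_tensor (e : α ≃ᵐ α) (he : MeasurePreserving e μ μ) (e' : β ≃ᵐ β)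
    (he' : MeasurePreserving e' ν ν)
    (hee' : MeasurePreserving (e.prodCongr e') (μ.prod ν) (μ.prod ν))
    (k : ℤ) (u : Lp 𝕜 2 μ) (v : Lp 𝕜 2 ν) :
    (Lp.koopman 𝕜 (e.prodCongr e') hee' ^ k) (tensor u v) =
      tensor ((Lp.koopman 𝕜 e he ^ k) u) ((Lp.koopman 𝕜 e' he' ^ k) v) :=
  LinearIsometryEquiv.zpow_apply_of_apply_eq (φ := fun u v => tensor u v)
    (koopman_prodCongr_tensor e he e' he' hee') k u v

theorem koopman_refl_prodCongr_zpow_tensor (e' : β ≃ᵐ β) (he' : MeasurePreserving e' ν ν)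
    (h : MeasurePreserving ((MeasurableEquiv.refl α).prodCongr e') (μ.prod ν) (μ.prod ν))
    (k : ℤ) (u : Lp 𝕜 2 μ) (v : Lp 𝕜 2 ν) :
    (Lp.koopman 𝕜 ((MeasurableEquiv.refl α).prodCongr e') h ^ k) (tensor u v) =
      tensor u ((Lp.koopman 𝕜 e' he' ^ k) v) := by
  rw [koopman_prodCongr_zpow_tensor _ (.id μ) e' he', Lp.koopman_refl (.id μ), one_zpow]
  rfl

theorem tensor_indicatorConstLp_one {s : Set α} {t : Set β} (hs : MeasurableSet s)
    (ht : MeasurableSet t) (hμs : μ s ≠ ∞) (hνt : ν t ≠ ∞) :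
    tensor (indicatorConstLp 2 hs hμs (1 : 𝕜)) (indicatorConstLp 2 ht hνt (1 : 𝕜)) =
      indicatorConstLp 2 (hs.prod ht)
        (by rw [Measure.prod_prod]; exact ENNReal.mul_ne_top hμs hνt) 1 :=
  Lp.ext <| by
    filter_upwards [coeFn_tensor (𝕜 := 𝕜) _ _,
      ae_eq_mul_prod (indicatorConstLp_coeFn (c := (1 : 𝕜)))
        (indicatorConstLp_coeFn (c := (1 : 𝕜))),
      indicatorConstLp_coeFn (c := (1 : 𝕜))] with z h₁ h₂ h₃
    rw [h₁, h₂, h₃]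
    exact Set.indicator_prod_one.symm

end SFinite

theorem inner_eq_integral_mul_conj {f g : Lp 𝕜 2 μ} {φ : α → 𝕜} (h : g =ᵐ[μ] φ) :
    ⟪f, g⟫_𝕜 = ∫ x, φ x * (starRingEnd 𝕜) (f x) ∂μ := by
  rw [inner_def]
  refine integral_congr_ae ?_
  filter_upwards [h] with x hx
  rw [RCLike.inner_apply, hx, mul_comm]

theorem dense_span_tensor [IsFiniteMeasure μ] [IsFiniteMeasure ν] {s : Set (Lp 𝕜 2 μ)}
    {t : Set (Lp 𝕜 2 ν)} (hs : Dense (Submodule.span 𝕜 s : Set (Lp 𝕜 2 μ)))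
    (ht : Dense (Submodule.span 𝕜 t : Set (Lp 𝕜 2 ν))) :
    Dense (Submodule.span 𝕜 (image2 (fun u v => tensor u v) s t) : Set (Lp 𝕜 2 (μ.prod ν))) := by
  rw [Submodule.dense_iff_topologicalClosure_eq_top, Submodule.topologicalClosure_eq_top_iff,
    Submodule.eq_bot_iff]
  intro w hw
  have horth : (ContinuousLinearMap.compL 𝕜 _ _ 𝕜 (innerSL 𝕜 w)).comp tensor = 0 :=
    ContinuousLinearMap.ext_on hs fun u hu => ContinuousLinearMap.ext_on ht fun v hv =>
      Submodule.inner_left_of_mem_orthogonal (Submodule.subset_span (mem_image2_of_mem hu hv)) hw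
  have hrect (a : Set α) (ha : MeasurableSet a) (b : Set β) (hb : MeasurableSet b) :
      ∫ z in a ×ˢ b, w z ∂(μ.prod ν) = 0 := by
    rw [← inner_indicatorConstLp_one (ha.prod hb) (measure_ne_top _ _),
      ← tensor_indicatorConstLp_one ha hb (measure_ne_top μ a) (measure_ne_top ν b),
      inner_eq_zero_symm]
    simpa using congr($horth _ _)
  have hwInt : Integrable w (μ.prod ν) := (Lp.memLp w).integrable one_le_two
  exact Lp.ext <| (hwInt.ae_eq_zero_of_forall_setIntegral_prod_eq_zero hrect).trans
    (Lp.coeFn_zero _ _ _).symm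

end L2

end MeasureTheory

/-- Lemma 1 of the paper.  Let `T`, `S` be invertible bimeasurable
measure-preserving transformations of probability spaces `(X, μ)`, `(Y, ν)` whose
Koopman operators both have simple spectrum.  If for some sequence `n i` the Koopman
operators of `(T × S)^[n i]` converge weakly to the Koopman operator of `id × S`
(i.e. `⟪F ∘ (T × S)^[n i], G⟫ → ⟪F ∘ (id × S), G⟫` for all `F, G ∈ L²(μ ⊗ ν)`),
then the Koopman operator of `T × S` has simple spectrum. -/
theorem simple_spectrum_of_product_of_weak_limit
    {X Y : Type*} [MeasurableSpace X] [MeasurableSpace Y]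
    (μ : Measure X) (ν : Measure Y) [IsProbabilityMeasure μ] [IsProbabilityMeasure ν]
    (T : X ≃ᵐ X) (S : Y ≃ᵐ Y)
    (hT : MeasurePreserving T μ μ) (hS : MeasurePreserving S ν ν)
    (hTs : HasSimpleKoopmanSpectrum μ T.toEquiv)
    (hSs : HasSimpleKoopmanSpectrum ν S.toEquiv)
    (n : ℕ → ℕ)
    (hweak : ∀ F G : Lp ℂ 2 (μ.prod ν),
      Tendsto
        (fun i => ∫ z, F ((Prod.map (⇑T) (⇑S))^[n i] z) * (starRingEnd ℂ) (G z)
          ∂(μ.prod ν))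
        atTop
        (nhds (∫ z : X × Y, F (z.1, S z.2) * (starRingEnd ℂ) (G z) ∂(μ.prod ν)))) :
    HasSimpleKoopmanSpectrum (μ.prod ν) (T.toEquiv.prodCongr S.toEquiv) := by
  obtain ⟨f, hf⟩ := (hasSimpleKoopmanSpectrum_iff T hT).1 hTs
  obtain ⟨g, hg⟩ := (hasSimpleKoopmanSpectrum_iff S hS).1 hSs
  refine (hasSimpleKoopmanSpectrum_iff (T.prodCongr S) (hT.prod hS)).2 ⟨L2.tensor f g, ?_⟩
  set U : Lp ℂ 2 (μ.prod ν) ≃ₗᵢ[ℂ] _ := Lp.koopman ℂ (T.prodCongr S) (hT.prod hS)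
  set V : Lp ℂ 2 (μ.prod ν) ≃ₗᵢ[ℂ] _ :=
    Lp.koopman ℂ ((MeasurableEquiv.refl X).prodCongr S) ((MeasurePreserving.id μ).prod hS)
  set K := (Submodule.span ℂ (range fun k : ℤ => (U ^ k) (L2.tensor f g))).topologicalClosure
  have hUK : ∀ k : ℤ, MapsTo ⇑(U ^ k) K K :=
    U.mapsTo_zpow_topologicalClosure_span_orbit (L2.tensor f g)
  have hVK : ∀ k : ℤ, MapsTo ⇑(V ^ k) K K :=
    Submodule.mapsTo_zpow_of_tendsto_inner_pow (Submodule.isClosed_topologicalClosure _) hUK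
      fun F G => by
        convert hweak F G using 2
        · exact L2.inner_eq_integral_mul_conj (Lp.coeFn_koopman_pow _ _ _ F)
        · exact L2.inner_eq_integral_mul_conj (Lp.coeFn_koopman _ _ F)
  have hU (k : ℤ) : (U ^ k) (L2.tensor f g) =
      L2.tensor ((Lp.koopman ℂ T hT ^ k) f) ((Lp.koopman ℂ S hS ^ k) g) :=
    L2.koopman_prodCongr_zpow_tensor T hT S hS _ k f g
  have hV (k : ℤ) (u : Lp ℂ 2 μ) (v : Lp ℂ 2 ν) :
      (V ^ k) (L2.tensor u v) = L2.tensor u ((Lp.koopman ℂ S hS ^ k) v) :=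
    L2.koopman_refl_prodCongr_zpow_tensor S hS _ k u v
  have hmem (j k : ℤ) : L2.tensor ((Lp.koopman ℂ T hT ^ j) f) ((Lp.koopman ℂ S hS ^ k) g) ∈ K := by
    have h : (V ^ (k - j)) ((U ^ j) (L2.tensor f g)) ∈ K :=
      hVK (k - j) (hUK j (subset_closure (Submodule.subset_span ⟨0, rfl⟩)))
    rwa [hU, hV, ← Function.comp_apply (f := ⇑(Lp.koopman ℂ S hS ^ (k - j))),
      ← LinearIsometryEquiv.coe_mul, ← zpow_add, sub_add_cancel] at h
  have hKdense : Dense (K : Set (Lp ℂ 2 (μ.prod ν))) :=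
    (L2.dense_span_tensor hf hg).mono <| Submodule.span_le.2 <| by
      rintro _ ⟨_, ⟨j, rfl⟩, _, ⟨k, rfl⟩, rfl⟩
      exact hmem j k
  rwa [Submodule.topologicalClosure_coe, dense_closure] at hKdense
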